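/- arXiv:2511.10553 — 2 statements merged into one kernel-verified Lean document; each statement's English description precedes it below -/
import Mathlib

section
/- For all real numbers a, b ≥ 0 and every real r ≥ 2, the inequality |a - b|^r - a^r - b^r ≥ -r(a·b^{r-1} + a^{r-1}·b) holds. -/
/-!
By symmetry assume `b ≤ a`. Bernoulli's inequality, rescaled by `a`, gives the tangent-line bound
`(a - b)^r ≥ a^r - r a^{r-1} b`, and `b^r = b · b^{r-1} ≤ a b^{r-1} ≤ r a b^{r-1}` absorbs the
remaining term.
-/

namespace Real

lemma rpow_sub_mul_rpow_sub_one_mul_le_rpow_sub {a b r : ℝ} (hb : 0 ≤ b) (hba : b ≤ a)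
    (hr : 1 ≤ r) : a ^ r - r * (a ^ (r - 1) * b) ≤ (a - b) ^ r := by
  rcases (hb.trans hba).eq_or_lt with rfl | ha
  · obtain rfl : b = 0 := le_antisymm hba hb
    simp
  have hx : -1 ≤ -(b / a) := by
    rw [neg_le_neg_iff]
    exact (div_le_one ha).mpr hba
  have hbern := mul_le_mul_of_nonneg_left (one_add_mul_self_le_rpow_one_add hx hr)
    (rpow_nonneg ha.le r)
  rw [← mul_rpow ha.le (by linarith)] at hbern
  calc a ^ r - r * (a ^ (r - 1) * b) = a ^ r * (1 + r * -(b / a)) := by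
        rw [rpow_sub ha, rpow_one]; field_simp; ring
    _ ≤ (a * (1 + -(b / a))) ^ r := hbern
    _ = (a - b) ^ r := by congr 1; field_simp; ring

lemma rpow_le_mul_mul_rpow_sub_one {a b r : ℝ} (hb : 0 ≤ b) (hba : b ≤ a) (hr : 1 ≤ r) :
    b ^ r ≤ r * (a * b ^ (r - 1)) :=
  calc b ^ r = b * b ^ (r - 1) := by
        rw [← rpow_one_add' hb (by linarith), add_sub_cancel]
    _ ≤ a * b ^ (r - 1) := mul_le_mul_of_nonneg_right hba (rpow_nonneg hb _)
    _ ≤ r * (a * b ^ (r - 1)) :=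
        le_mul_of_one_le_left (mul_nonneg (hb.trans hba) (rpow_nonneg hb _)) hr

lemma rpow_add_rpow_sub_le_sub_rpow {a b r : ℝ} (hb : 0 ≤ b) (hba : b ≤ a) (hr : 1 ≤ r) :
    a ^ r + b ^ r - r * (a * b ^ (r - 1) + a ^ (r - 1) * b) ≤ (a - b) ^ r := by
  have := rpow_sub_mul_rpow_sub_one_mul_le_rpow_sub hb hba hr
  have := rpow_le_mul_mul_rpow_sub_one hb hba hr
  linarith

end Real

/-- For all real `a, b ≥ 0` and `r ≥ 2`,
`|a - b|^r - a^r - b^r ≥ -r (a b^{r-1} + a^{r-1} b)` (real powers). -/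
theorem stmt_0 (a b r : ℝ) (ha : 0 ≤ a) (hb : 0 ≤ b) (hr : 2 ≤ r) :
    |a - b| ^ r - a ^ r - b ^ r ≥ -(r * (a * b ^ (r - 1) + a ^ (r - 1) * b)) := by
  have hr1 : 1 ≤ r := by linarith
  rcases le_total b a with hba | hab
  · rw [abs_of_nonneg (sub_nonneg.mpr hba)]
    linarith [Real.rpow_add_rpow_sub_le_sub_rpow hb hba hr1]
  · rw [abs_sub_comm, abs_of_nonneg (sub_nonneg.mpr hab)]
    linarith [Real.rpow_add_rpow_sub_le_sub_rpow ha hab hr1]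
end

section
/- Let f₁, f₂ : [0,1] × [0,1] → ℝ be continuous and suppose f₁(0,t) ≥ 0 and f₁(1,t) ≤ 0 for all t ∈ [0,1], and f₂(s,0) < 0 and f₂(s,1) ≥ 0 for all s ∈ [0,1]. Then there exists (s₀,t₀) ∈ [0,1] × [0,1] with f₁(s₀,t₀) = 0 and f₂(s₀,t₀) = 0. -/
open Finset Filter Topology

/-- `sp a b = 1` iff the unordered pair of labels is `{0,1}`. -/
def PM.sp : Fin 3 → Fin 3 → ZMod 2 :=
  fun a b => if (a = 0 ∧ b = 1) ∨ (a = 1 ∧ b = 0) then 1 else 0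

def PM.pr : Fin 3 → ZMod 2 := fun a => if a = 1 then 1 else 0

namespace PM

lemma sp_eq_pr : ∀ a b : Fin 3, a ≠ 2 → b ≠ 2 → sp a b = pr a + pr b := by decide

lemma sp_ne_zero : ∀ a b : Fin 3, a ≠ 0 → b ≠ 0 → sp a b = 0 := by decide

lemma sp_ne_one : ∀ a b : Fin 3, a ≠ 1 → b ≠ 1 → sp a b = 0 := by decide

lemma tri_full : ∀ a b c : Fin 3, sp a b + sp b c + sp a c = 1 →
    ∀ v : Fin 3, v = a ∨ v = b ∨ v = c := by decide

lemma zmod2_ne (x y : ZMod 2) (h : x ≠ y) : x + y = 1 := by revert x y; decide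

lemma zmod2_add_ne (x y : ZMod 2) (h : x + y ≠ 0) : x = 1 ∨ y = 1 := by revert x y; decide

lemma telescope (u : ℕ → ZMod 2) : ∀ n, ∑ j ∈ range n, (u j + u (j + 1)) = u 0 + u n := by
  intro n
  induction n with
  | zero =>
    have : ∀ x : ZMod 2, (0 : ZMod 2) = x + x := by decide
    simpa using this (u 0)
  | succ n ih =>
    rw [sum_range_succ, ih]
    have h2 : u n + u n = 0 := by
      have : ∀ x : ZMod 2, x + x = 0 := by decide
      exact this _
    linear_combination h2

lemma discrete_miranda (n : ℕ) (L : ℕ → ℕ → Fin 3)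
    (hbot : ∀ i ≤ n, L i 0 = 0)
    (htop : ∀ i ≤ n, L i n ≠ 0)
    (hleft : ∀ j ≤ n, L 0 j ≠ 2)
    (hright : ∀ j ≤ n, L n j ≠ 1) :
    ∃ i < n, ∃ j < n, ∀ v : Fin 3, ∃ p : ℕ × ℕ,
      (p.1 = i ∨ p.1 = i + 1) ∧ (p.2 = j ∨ p.2 = j + 1) ∧ L p.1 p.2 = v := by
  classical
  set c : ℕ → ZMod 2 := fun i => ∑ j ∈ range n, sp (L i j) (L i (j + 1)) with hcdef
  have hc0 : c 0 = 1 := by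
    have h01 : ∀ j ∈ range n, sp (L 0 j) (L 0 (j + 1)) = pr (L 0 j) + pr (L 0 (j + 1)) := by
      intro j hj
      exact sp_eq_pr _ _ (hleft j (le_of_lt (mem_range.mp hj)))
        (hleft (j + 1) (mem_range.mp hj))
    have hL0n : L 0 n = 1 := by
      have h3 : ∀ a : Fin 3, a ≠ 0 → a ≠ 2 → a = 1 := by decide
      exact h3 _ (htop 0 (Nat.zero_le n)) (hleft n le_rfl)
    have tel : ∑ j ∈ range n, (pr (L 0 j) + pr (L 0 (j + 1))) = pr (L 0 0) + pr (L 0 n) :=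
      telescope (fun j => pr (L 0 j)) n
    calc c 0 = ∑ j ∈ range n, (pr (L 0 j) + pr (L 0 (j + 1))) := sum_congr rfl h01
    _ = pr (L 0 0) + pr (L 0 n) := tel
    _ = 1 := by rw [hbot 0 (Nat.zero_le n), hL0n]; decide
  have hcn : c n = 0 := by
    exact sum_eq_zero fun j hj =>
      sp_ne_one _ _ (hright j (le_of_lt (mem_range.mp hj))) (hright (j + 1) (mem_range.mp hj))
  -- there is a column where the parity changes
  have hstep : ∃ i < n, c i ≠ c (i + 1) := by
    by_contra h
    push_neg at h
    have key : ∀ k ≤ n, c 0 = c k := by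
      intro k hk
      induction k with
      | zero => rfl
      | succ k ih =>
        rw [ih (Nat.le_of_succ_le hk), h k (Nat.lt_of_succ_le hk)]
    have := key n le_rfl
    rw [hc0, hcn] at this
    exact absurd this (by decide)
  obtain ⟨i, hi, hne⟩ := hstep
  -- strip identity
  have strip : ∑ j ∈ range n,
      ((sp (L i j) (L (i+1) j) + sp (L (i+1) j) (L (i+1) (j+1)) + sp (L i j) (L (i+1) (j+1)))
      + (sp (L i j) (L i (j+1)) + sp (L i (j+1)) (L (i+1) (j+1)) + sp (L i j) (L (i+1) (j+1))))
      = c i + c (i + 1)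
        + (sp (L i 0) (L (i+1) 0) + sp (L i n) (L (i+1) n)) := by
    have hterm : ∀ j ∈ range n,
        ((sp (L i j) (L (i+1) j) + sp (L (i+1) j) (L (i+1) (j+1)) + sp (L i j) (L (i+1) (j+1)))
        + (sp (L i j) (L i (j+1)) + sp (L i (j+1)) (L (i+1) (j+1)) + sp (L i j) (L (i+1) (j+1))))
        = (sp (L i j) (L i (j+1)) + sp (L (i+1) j) (L (i+1) (j+1)))
          + (sp (L i j) (L (i+1) j) + sp (L i (j+1)) (L (i+1) (j+1))) := by
      intro j _
      have h2 : sp (L i j) (L (i+1) (j+1)) + sp (L i j) (L (i+1) (j+1)) = 0 := by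
        have : ∀ x : ZMod 2, x + x = 0 := by decide
        exact this _
      linear_combination h2
    have tel : ∑ j ∈ range n, (sp (L i j) (L (i+1) j) + sp (L i (j+1)) (L (i+1) (j+1)))
        = sp (L i 0) (L (i+1) 0) + sp (L i n) (L (i+1) n) :=
      telescope (fun j => sp (L i j) (L (i+1) j)) n
    calc ∑ j ∈ range n,
        ((sp (L i j) (L (i+1) j) + sp (L (i+1) j) (L (i+1) (j+1)) + sp (L i j) (L (i+1) (j+1)))
        + (sp (L i j) (L i (j+1)) + sp (L i (j+1)) (L (i+1) (j+1)) + sp (L i j) (L (i+1) (j+1))))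
        = ∑ j ∈ range n,
          ((sp (L i j) (L i (j+1)) + sp (L (i+1) j) (L (i+1) (j+1)))
          + (sp (L i j) (L (i+1) j) + sp (L i (j+1)) (L (i+1) (j+1)))) := sum_congr rfl hterm
    _ = (∑ j ∈ range n, (sp (L i j) (L i (j+1)) + sp (L (i+1) j) (L (i+1) (j+1))))
        + ∑ j ∈ range n, (sp (L i j) (L (i+1) j) + sp (L i (j+1)) (L (i+1) (j+1))) :=
      sum_add_distrib
    _ = ((∑ j ∈ range n, sp (L i j) (L i (j+1))) + ∑ j ∈ range n, sp (L (i+1) j) (L (i+1) (j+1)))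
        + (sp (L i 0) (L (i+1) 0) + sp (L i n) (L (i+1) n)) := by rw [sum_add_distrib, tel]
    _ = c i + c (i + 1) + (sp (L i 0) (L (i+1) 0) + sp (L i n) (L (i+1) n)) := rfl
  have hb0 : sp (L i 0) (L (i+1) 0) = 0 := by
    rw [hbot i (le_of_lt hi), hbot (i+1) hi]
    decide
  have hbn : sp (L i n) (L (i+1) n) = 0 :=
    sp_ne_zero _ _ (htop i (le_of_lt hi)) (htop (i+1) hi)
  rw [hb0, hbn, zmod2_ne _ _ hne] at strip
  simp only [add_zero] at strip
  -- some cell has a fully labeled triangle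
  have hcell : ∃ j ∈ range n,
      ((sp (L i j) (L (i+1) j) + sp (L (i+1) j) (L (i+1) (j+1)) + sp (L i j) (L (i+1) (j+1)))
      + (sp (L i j) (L i (j+1)) + sp (L i (j+1)) (L (i+1) (j+1)) + sp (L i j) (L (i+1) (j+1)))) ≠ 0 := by
    by_contra h
    push_neg at h
    rw [sum_eq_zero h] at strip
    exact absurd strip.symm (by decide)
  obtain ⟨j, hj, hne2⟩ := hcell
  refine ⟨i, hi, j, mem_range.mp hj, ?_⟩
  rcases zmod2_add_ne _ _ hne2 with h | h
  · intro v
    rcases tri_full _ _ _ h v with hv | hv | hv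
    · exact ⟨(i, j), Or.inl rfl, Or.inl rfl, hv.symm⟩
    · exact ⟨(i+1, j), Or.inr rfl, Or.inl rfl, hv.symm⟩
    · exact ⟨(i+1, j+1), Or.inr rfl, Or.inr rfl, hv.symm⟩
  · intro v
    rcases tri_full _ _ _ h v with hv | hv | hv
    · exact ⟨(i, j), Or.inl rfl, Or.inl rfl, hv.symm⟩
    · exact ⟨(i, j+1), Or.inl rfl, Or.inr rfl, hv.symm⟩
    · exact ⟨(i+1, j+1), Or.inr rfl, Or.inr rfl, hv.symm⟩

end PM

/-- Two-dimensional Poincaré–Miranda theorem: if `f₁, f₂` are continuous on the unit square,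
`f₁(0,t) ≥ 0`, `f₁(1,t) ≤ 0`, `f₂(s,0) < 0` and `f₂(s,1) ≥ 0`, then there is a common zero. -/
theorem stmt_4 (f₁ f₂ : ℝ × ℝ → ℝ)
    (h₁ : ContinuousOn f₁ (Set.Icc 0 1 ×ˢ Set.Icc 0 1))
    (h₂ : ContinuousOn f₂ (Set.Icc 0 1 ×ˢ Set.Icc 0 1))
    (ha : ∀ t ∈ Set.Icc (0 : ℝ) 1, 0 ≤ f₁ (0, t))
    (hb : ∀ t ∈ Set.Icc (0 : ℝ) 1, f₁ (1, t) ≤ 0)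
    (hc : ∀ s ∈ Set.Icc (0 : ℝ) 1, f₂ (s, 0) < 0)
    (hd : ∀ s ∈ Set.Icc (0 : ℝ) 1, 0 ≤ f₂ (s, 1)) :
    ∃ p ∈ Set.Icc (0 : ℝ) 1 ×ˢ Set.Icc (0 : ℝ) 1, f₁ p = 0 ∧ f₂ p = 0 := by
  classical
  set K : Set (ℝ × ℝ) := Set.Icc (0:ℝ) 1 ×ˢ Set.Icc (0:ℝ) 1 with hKdef
  -- Step 1: approximate solutions at every scale
  have H : ∀ n : ℕ, ∃ x y z : ℝ × ℝ, x ∈ K ∧ y ∈ K ∧ z ∈ K ∧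
      dist y x ≤ 1/((n:ℝ)+1) ∧ dist z x ≤ 1/((n:ℝ)+1) ∧
      0 ≤ f₂ x ∧ -(1/((n:ℝ)+1)) ≤ f₁ x ∧ f₁ y ≤ 1/((n:ℝ)+1) ∧ f₂ z < 0 := by
    intro n
    set m : ℕ := n + 1 with hmdef
    have hm0 : (0:ℝ) < (m:ℝ) := by positivity
    have hmR : ((m:ℝ)) = (n:ℝ) + 1 := by push_cast [hmdef]; ring
    set q : ℕ → ℕ → ℝ × ℝ := fun i j => ((i:ℝ)/(m:ℝ), (j:ℝ)/(m:ℝ)) with hqdef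
    have hcoord : ∀ i : ℕ, i ≤ m → (i:ℝ)/(m:ℝ) ∈ Set.Icc (0:ℝ) 1 := by
      intro i hi
      refine ⟨by positivity, ?_⟩
      rw [div_le_one hm0]
      exact_mod_cast hi
    have hmem : ∀ i j : ℕ, i ≤ m → j ≤ m → q i j ∈ K := fun i j hi hj =>
      ⟨hcoord i hi, hcoord j hj⟩
    set g : ℕ → ℕ → ℝ := fun i j => f₁ (q i j) + (1/(m:ℝ)) * (1 - 2 * ((i:ℝ)/(m:ℝ)))
      with hgdef
    set L : ℕ → ℕ → Fin 3 := fun i j =>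
      if f₂ (q i j) < 0 then 0 else if 0 ≤ g i j then 1 else 2 with hLdef
    have hq0 : ∀ i : ℕ, q i 0 = ((i:ℝ)/(m:ℝ), 0) := by
      intro i; simp [hqdef]
    have hqm : ∀ i : ℕ, q i m = ((i:ℝ)/(m:ℝ), 1) := by
      intro i; simp [hqdef, div_self hm0.ne']
    have hq0' : ∀ j : ℕ, q 0 j = (0, (j:ℝ)/(m:ℝ)) := by
      intro j; simp [hqdef]
    have hqm' : ∀ j : ℕ, q m j = (1, (j:ℝ)/(m:ℝ)) := by
      intro j; simp [hqdef, div_self hm0.ne']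
    have hbot : ∀ i ≤ m, L i 0 = 0 := by
      intro i hi
      have : f₂ (q i 0) < 0 := by rw [hq0 i]; exact hc _ (hcoord i hi)
      simp [hLdef, this]
    have htop : ∀ i ≤ m, L i m ≠ 0 := by
      intro i hi
      have h1 : ¬ f₂ (q i m) < 0 := by
        rw [hqm i]; exact not_lt.mpr (hd _ (hcoord i hi))
      simp only [hLdef, if_neg h1]
      split_ifs <;> decide
    have hleft : ∀ j ≤ m, L 0 j ≠ 2 := by
      intro j hj
      simp only [hLdef]
      split_ifs with h1 h2
      · decide
      · decide
      · exfalso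
        apply h2
        have hf : 0 ≤ f₁ (q 0 j) := by rw [hq0' j]; exact ha _ (hcoord j hj)
        have : g 0 j = f₁ (q 0 j) + (1/(m:ℝ)) := by
          simp [hgdef]
        rw [this]
        positivity
    have hright : ∀ j ≤ m, L m j ≠ 1 := by
      intro j hj
      simp only [hLdef]
      split_ifs with h1 h2
      · decide
      · exfalso
        have hf : f₁ (q m j) ≤ 0 := by rw [hqm' j]; exact hb _ (hcoord j hj)
        have hg : g m j = f₁ (q m j) - 1/(m:ℝ) := by
          rw [hgdef]
          simp only []
          rw [div_self hm0.ne']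
          ring
        rw [hg] at h2
        have : (0:ℝ) < 1/(m:ℝ) := by positivity
        linarith
      · decide
    obtain ⟨i, hi, j, hj, hcell⟩ := PM.discrete_miranda m L hbot htop hleft hright
    obtain ⟨p0, hp01, hp02, hLp0⟩ := hcell 0
    obtain ⟨p1, hp11, hp12, hLp1⟩ := hcell 1
    obtain ⟨p2, hp21, hp22, hLp2⟩ := hcell 2
    have hle : ∀ a : ℕ, (a = i ∨ a = i + 1) → a ≤ m := by
      rintro a (rfl | rfl) <;> omega
    have hle' : ∀ a : ℕ, (a = j ∨ a = j + 1) → a ≤ m := by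
      rintro a (rfl | rfl) <;> omega
    have hdist1 : ∀ a b : ℕ, (a = i ∨ a = i + 1) → (b = i ∨ b = i + 1) →
        dist ((a:ℝ)/(m:ℝ)) ((b:ℝ)/(m:ℝ)) ≤ 1/(m:ℝ) := by
      intro a b ha' hb'
      have habs : |(a:ℝ) - (b:ℝ)| ≤ 1 := by
        rcases ha' with rfl | rfl <;> rcases hb' with rfl | rfl <;> push_cast <;>
          rw [abs_le] <;> constructor <;> linarith
      rw [Real.dist_eq, div_sub_div_same, abs_div, abs_of_pos hm0]
      calc |(a:ℝ) - (b:ℝ)| / (m:ℝ) ≤ 1 / (m:ℝ) := by gcongr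
      _ = 1/(m:ℝ) := rfl
    have hdistq : ∀ p p' : ℕ × ℕ, (p.1 = i ∨ p.1 = i + 1) → (p.2 = j ∨ p.2 = j + 1) →
        (p'.1 = i ∨ p'.1 = i + 1) → (p'.2 = j ∨ p'.2 = j + 1) →
        dist (q p.1 p.2) (q p'.1 p'.2) ≤ 1/(m:ℝ) := by
      intro p p' h1 h2 h3 h4
      rw [Prod.dist_eq]
      apply max_le (hdist1 _ _ h1 h3) ?_
      -- second coordinates: same lemma with j
      have hdist2 : ∀ a b : ℕ, (a = j ∨ a = j + 1) → (b = j ∨ b = j + 1) →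
          dist ((a:ℝ)/(m:ℝ)) ((b:ℝ)/(m:ℝ)) ≤ 1/(m:ℝ) := by
        intro a b ha' hb'
        have habs : |(a:ℝ) - (b:ℝ)| ≤ 1 := by
          rcases ha' with rfl | rfl <;> rcases hb' with rfl | rfl <;> push_cast <;>
            rw [abs_le] <;> constructor <;> linarith
        rw [Real.dist_eq, div_sub_div_same, abs_div, abs_of_pos hm0]
        gcongr
      exact hdist2 _ _ h2 h4
    -- decode the labels
    have hz : f₂ (q p0.1 p0.2) < 0 := by
      by_contra hcon
      rw [hLdef] at hLp0
      simp only [if_neg hcon] at hLp0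
      split_ifs at hLp0 <;> exact absurd hLp0 (by decide)
    have hx1 : ¬ f₂ (q p1.1 p1.2) < 0 ∧ 0 ≤ g p1.1 p1.2 := by
      rw [hLdef] at hLp1
      by_cases hA : f₂ (q p1.1 p1.2) < 0
      · simp only [if_pos hA] at hLp1; exact absurd hLp1 (by decide)
      · simp only [if_neg hA] at hLp1
        by_cases hB : 0 ≤ g p1.1 p1.2
        · exact ⟨hA, hB⟩
        · simp only [if_neg hB] at hLp1; exact absurd hLp1 (by decide)
    have hy2 : ¬ f₂ (q p2.1 p2.2) < 0 ∧ ¬ 0 ≤ g p2.1 p2.2 := by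
      rw [hLdef] at hLp2
      by_cases hA : f₂ (q p2.1 p2.2) < 0
      · simp only [if_pos hA] at hLp2; exact absurd hLp2 (by decide)
      · simp only [if_neg hA] at hLp2
        by_cases hB : 0 ≤ g p2.1 p2.2
        · simp only [if_pos hB] at hLp2; exact absurd hLp2 (by decide)
        · exact ⟨hA, hB⟩
    -- bounds on f₁ from bounds on g
    have hsbound : ∀ a : ℕ, a ≤ m → -(1/(m:ℝ)) ≤ (1/(m:ℝ)) * (1 - 2 * ((a:ℝ)/(m:ℝ)))
        ∧ (1/(m:ℝ)) * (1 - 2 * ((a:ℝ)/(m:ℝ))) ≤ 1/(m:ℝ) := by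
      intro a haM
      obtain ⟨hs0, hs1⟩ := hcoord a haM
      have hpos : (0:ℝ) < 1/(m:ℝ) := by positivity
      constructor <;> nlinarith
    refine ⟨q p1.1 p1.2, q p2.1 p2.2, q p0.1 p0.2,
      hmem _ _ (hle _ hp11) (hle' _ hp12),
      hmem _ _ (hle _ hp21) (hle' _ hp22),
      hmem _ _ (hle _ hp01) (hle' _ hp02), ?_, ?_, not_lt.mp hx1.1, ?_, ?_, hz⟩
    · rw [← hmR]; exact hdistq _ _ hp21 hp22 hp11 hp12
    · rw [← hmR]; exact hdistq _ _ hp01 hp02 hp11 hp12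
    · rw [← hmR]
      have := hx1.2
      rw [hgdef] at this
      simp only [] at this
      have hbnd := (hsbound p1.1 (hle _ hp11)).2
      linarith
    · rw [← hmR]
      have := not_le.mp hy2.2
      rw [hgdef] at this
      simp only [] at this
      have hbnd := (hsbound p2.1 (hle _ hp21)).1
      linarith
  -- Step 2: take limits
  choose x y z hxK hyK hzK hdyx hdzx hf2x hf1x hf1y hf2z using H
  have hKcomp : IsCompact K := (isCompact_Icc).prod isCompact_Icc
  obtain ⟨x0, hx0K, φ, hφ, hxlim⟩ := hKcomp.tendsto_subseq hxK
  have htend0 : Tendsto (fun k : ℕ => 1/((φ k : ℝ)+1)) atTop (𝓝 0) := by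
    have := (tendsto_one_div_add_atTop_nhds_zero_nat : Tendsto (fun n : ℕ => 1 / ((n : ℝ) + 1)) atTop (𝓝 0)).comp hφ.tendsto_atTop
    exact this
  have hylim : Tendsto (fun k => y (φ k)) atTop (𝓝 x0) := by
    apply hxlim.congr_dist
    apply squeeze_zero (fun k => dist_nonneg) (fun k => ?_) htend0
    rw [dist_comm]
    exact hdyx (φ k)
  have hzlim : Tendsto (fun k => z (φ k)) atTop (𝓝 x0) := by
    apply hxlim.congr_dist
    apply squeeze_zero (fun k => dist_nonneg) (fun k => ?_) htend0
    rw [dist_comm]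
    exact hdzx (φ k)
  have hcomp : ∀ (f : ℝ × ℝ → ℝ), ContinuousOn f K → ∀ (w : ℕ → ℝ × ℝ), (∀ k, w k ∈ K) →
      Tendsto w atTop (𝓝 x0) → Tendsto (fun k => f (w k)) atTop (𝓝 (f x0)) := by
    intro f hf w hwK hwlim
    have hwin : Tendsto w atTop (𝓝[K] x0) :=
      tendsto_nhdsWithin_iff.mpr ⟨hwlim, Eventually.of_forall hwK⟩
    exact (hf x0 hx0K).tendsto.comp hwin
  have hf1xlim := hcomp f₁ h₁ (fun k => x (φ k)) (fun k => hxK (φ k)) hxlim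
  have hf1ylim := hcomp f₁ h₁ (fun k => y (φ k)) (fun k => hyK (φ k)) hylim
  have hf2xlim := hcomp f₂ h₂ (fun k => x (φ k)) (fun k => hxK (φ k)) hxlim
  have hf2zlim := hcomp f₂ h₂ (fun k => z (φ k)) (fun k => hzK (φ k)) hzlim
  have h1ge : (0:ℝ) ≤ f₁ x0 := by
    have hneg : Tendsto (fun k : ℕ => -(1/((φ k : ℝ)+1))) atTop (𝓝 0) := by
      simpa using htend0.neg
    exact le_of_tendsto_of_tendsto' hneg hf1xlim (fun k => hf1x (φ k))
  have h1le : f₁ x0 ≤ 0 :=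
    le_of_tendsto_of_tendsto' hf1ylim htend0 (fun k => hf1y (φ k))
  have h2ge : (0:ℝ) ≤ f₂ x0 :=
    le_of_tendsto_of_tendsto' tendsto_const_nhds hf2xlim (fun k => hf2x (φ k))
  have h2le : f₂ x0 ≤ 0 :=
    le_of_tendsto_of_tendsto' hf2zlim tendsto_const_nhds (fun k => (hf2z (φ k)).le)
  exact ⟨x0, hx0K, le_antisymm h1le h1ge, le_antisymm h2le h2ge⟩
end
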